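/- arXiv:math/0312148 — 2 statements merged into one kernel-verified Lean document; each statement's English description precedes it below -/
import Mathlib

section
/- Let d ≥ 1 and let s₁,…,s_d be complex numbers. The multiple series ∑_{0 < n₁ < n₂ < ⋯ < n_d} 1/(n₁^{s₁} n₂^{s₂} ⋯ n_d^{s_d}) converges absolutely if and only if ∑_{i=r}^{d} Re(s_i) > d − r + 1 for every r = 1, 2, …, d. -/
open MeasureTheory

/-- Pochhammer symbol `(x)_k = x(x+1)⋯(x+k-1)`. -/
noncomputable def poch (x : ℂ) (k : ℕ) : ℂ := ∏ i ∈ Finset.range k, (x + (i : ℂ))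

/-- Generalized hypergeometric series with upper parameters `α`, lower parameters `β`. -/
noncomputable def hyp (α β : List ℂ) (z : ℂ) : ℂ :=
  ∑' k : ℕ, ((α.map fun w => poch w k).prod /
    ((β.map fun w => poch w k).prod * (Nat.factorial k : ℂ))) * z ^ k

/-- Nested expression: `nestR [x₁,…,x_m] = 1 - (1 - (⋯(1 - x_m)x_{m-1}⋯))x₁`. -/
def nestR : List ℝ → ℝ
  | [] => 1
  | t :: rest => 1 - nestR rest * t

/-- The Vasilyev-type integral `J_m(a₀,…,a_m; b₁,…,b_m; z)`. -/
noncomputable def Jint (m : ℕ) (a b : ℕ → ℂ) (z : ℂ) : ℂ :=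
  ∫ x in Set.univ.pi fun _ : Fin m => Set.Ioo (0:ℝ) 1,
    (∏ i : Fin m, ((x i : ℂ) ^ (a (i.1+1) - 1) *
        ((1 - x i : ℝ) : ℂ) ^ (b (i.1+1) - a (i.1+1) - 1))) /
      ((1 - ((nestR (List.ofFn x).tail * (List.ofFn x).headI : ℝ) : ℂ) * z) ^ (a 0))

open Finset Filter Topology

/-!
Write `σᵢ = Re sᵢ`. If every tail sum `σ_r + ⋯ + σ_d` exceeds `d - r + 1`, then for some `s > 1`
all tail sums of `σᵢ - s` are nonnegative; Abel summation against the nondecreasing weights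
`log nᵢ` then bounds each term by `∏ nᵢ ^ (-s)`, which is summable over all of `ℕ^d`.

Conversely, if `σ_r + ⋯ + σ_d ≤ d - r + 1 =: m`, fix `nᵢ = i` for `i < r` and let the last `m`
entries run independently through the consecutive blocks `[(r + l) B, (r + l + 1) B)`. Each of
these `B ^ m` tuples contributes at least a constant times `B ^ (-(σ_r + ⋯ + σ_d)) ≥ B ^ (-m)`, so
for every `B` they carry a mass bounded below, while for large `B` they avoid any given finite
set: this contradicts the Cauchy criterion.
-/

theorem mul_sum_le_sum_mul_of_tail_nonneg {d : ℕ} (e t : Fin (d + 1) → ℝ) (ht : Monotone t)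
    (he : ∀ j < d + 1, 0 ≤ ∑ i : Fin _ with j ≤ i.val, e i) :
    t 0 * ∑ i, e i ≤ ∑ i, e i * t i := by
  induction d with
  | zero => simp [mul_comm]
  | succ d ih =>
    have hshift (j : ℕ) :
        ∑ i : Fin (d + 1) with j ≤ i.val, e i.succ = ∑ i : Fin _ with j + 1 ≤ i.val, e i := by
      simp only [sum_filter, Fin.sum_univ_succ (n := d + 1)]; simp
    have htail : 0 ≤ ∑ i : Fin (d + 1), e i.succ := by simpa [← hshift 0] using he 1 (by omega)
    calc t 0 * ∑ i, e i = e 0 * t 0 + t 0 * ∑ i : Fin (d + 1), e i.succ := by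
          rw [Fin.sum_univ_succ]; ring
      _ ≤ e 0 * t 0 + t (Fin.succ 0) * ∑ i : Fin (d + 1), e i.succ := by
          gcongr; exact ht (Fin.zero_le _)
      _ ≤ e 0 * t 0 + ∑ i : Fin (d + 1), e i.succ * t i.succ := by
          gcongr
          exact ih (e ∘ Fin.succ) (t ∘ Fin.succ) (ht.comp (Fin.strictMono_succ.monotone))
            fun j hj => (hshift j).symm ▸ he (j + 1) (by omega)
      _ = ∑ i, e i * t i := (Fin.sum_univ_succ (fun i => e i * t i)).symm

theorem prod_rpow_neg_le_one {d : ℕ} (x e : Fin d → ℝ) (hx : Monotone x) (hx1 : ∀ i, 1 ≤ x i)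
    (he : ∀ j < d, 0 ≤ ∑ i : Fin _ with j ≤ i.val, e i) :
    ∏ i, x i ^ (-e i) ≤ 1 := by
  have hpos i : 0 < x i := one_pos.trans_le (hx1 i)
  have hsum : 0 ≤ ∑ i, e i * Real.log (x i) := by
    cases d with
    | zero => simp
    | succ d =>
      have htotal : 0 ≤ ∑ i, e i := by simpa using he 0 d.succ_pos
      exact (mul_nonneg (Real.log_nonneg (hx1 0)) htotal).trans
        (mul_sum_le_sum_mul_of_tail_nonneg e _
          (fun a b h => Real.log_le_log (hpos a) (hx h)) he)
  calc ∏ i, x i ^ (-e i) = Real.exp (-∑ i, e i * Real.log (x i)) := by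
        rw [← sum_neg_distrib, Real.exp_sum]
        exact prod_congr rfl fun i _ => by rw [Real.rpow_def_of_pos (hpos i)]; ring_nf
    _ ≤ 1 := Real.exp_le_one_iff.2 (neg_nonpos.2 hsum)

theorem prod_rpow_neg_le_prod_rpow_neg {d : ℕ} (n : Fin d → ℕ) (hn : Monotone n)
    (hn1 : ∀ i, 1 ≤ n i) (σ : Fin d → ℝ) (s : ℝ)
    (hσ : ∀ j < d, 0 ≤ ∑ i : Fin _ with j ≤ i.val, (σ i - s)) :
    ∏ i, (n i : ℝ) ^ (-σ i) ≤ ∏ i, (n i : ℝ) ^ (-s) := by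
  have hpos i : (0 : ℝ) < n i := by exact_mod_cast hn1 i
  calc ∏ i, (n i : ℝ) ^ (-σ i) = (∏ i, (n i : ℝ) ^ (-s)) * ∏ i, (n i : ℝ) ^ (-(σ i - s)) := by
        rw [← prod_mul_distrib]
        exact prod_congr rfl fun i _ => by rw [← Real.rpow_add (hpos i)]; ring_nf
    _ ≤ (∏ i, (n i : ℝ) ^ (-s)) * 1 := by
        gcongr
        exact prod_rpow_neg_le_one _ _ (fun a b h => by exact_mod_cast hn h)
          (fun i => by exact_mod_cast hn1 i) hσ
    _ = ∏ i, (n i : ℝ) ^ (-s) := mul_one _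

theorem summable_fin_pi_prod_of_nonneg {α : Type*} (f : α → ℝ) (hf : Summable f) (h0 : 0 ≤ f)
    (d : ℕ) : Summable (fun n : Fin d → α => ∏ i, f (n i)) := by
  induction d with
  | zero => exact summable_of_hasFiniteSupport (Set.toFinite _)
  | succ d ih =>
    rw [← (Fin.consEquiv fun _ : Fin (d + 1) => α).summable_iff]
    refine (hf.mul_of_nonneg ih h0 fun n => prod_nonneg fun i _ => h0 _).congr fun p => ?_
    simp [Fin.consEquiv, Fin.prod_univ_succ]

theorem summable_prod_rpow_neg_of_tail_nonneg (d : ℕ) (hd : 0 < d) (σ : Fin d → ℝ) (s : ℝ)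
    (hs : 1 < s) (hσ : ∀ j < d, 0 ≤ ∑ i : Fin _ with j ≤ i.val, (σ i - s)) :
    Summable (fun p : {n : Fin d → ℕ // StrictMono n ∧ 0 < n ⟨0, hd⟩} =>
      ∏ i, (p.1 i : ℝ) ^ (-σ i)) := by
  have hdom : Summable (fun p : {n : Fin d → ℕ // StrictMono n ∧ 0 < n ⟨0, hd⟩} =>
      ∏ i, (p.1 i : ℝ) ^ (-s)) :=
    (summable_fin_pi_prod_of_nonneg _ (Real.summable_nat_rpow.2 (by linarith))
      (fun k => by positivity) d).comp_injective Subtype.val_injective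
  refine hdom.of_nonneg_of_le (fun p => by positivity) fun ⟨n, hmono, hpos⟩ => ?_
  exact prod_rpow_neg_le_prod_rpow_neg n hmono.monotone
    (fun i => hpos.trans_le (hmono.monotone (Nat.zero_le i.1))) σ s hσ

theorem rpow_neg_abs_mul_rpow_le_rpow {x y c : ℝ} (s : ℝ) (hx : 0 < x) (hc : 1 ≤ c)
    (hxy : x ≤ y) (hyx : y ≤ c * x) : c ^ (-|s|) * x ^ s ≤ y ^ s := by
  rcases le_total 0 s with hs | hs
  · calc c ^ (-|s|) * x ^ s ≤ 1 * x ^ s := by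
          gcongr; exact Real.rpow_le_one_of_one_le_of_nonpos hc (by simp)
      _ ≤ y ^ s := by rw [one_mul]; exact Real.rpow_le_rpow hx.le hxy hs
  · rw [abs_of_nonpos hs, neg_neg, ← Real.mul_rpow (by linarith) hx.le]
    exact Real.rpow_le_rpow_of_nonpos (hx.trans_le hxy) hyx hs

def blockTuple (k m B : ℕ) (c : Fin m → Fin B) : Fin (k + m) → ℕ :=
  Fin.append (fun i : Fin k => (i : ℕ) + 1) (fun l => (k + 1 + l) * B + c l)

noncomputable def blockConst (k m : ℕ) (σ : Fin (k + m) → ℝ) : ℝ :=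
  (∏ i : Fin k, (((i : ℕ) + 1 : ℕ) : ℝ) ^ (-σ (Fin.castAdd m i))) *
    ∏ l : Fin m, ((k + m + 1 : ℕ) : ℝ) ^ (-|σ (Fin.natAdd k l)|)

section blockTuple

variable {k m B : ℕ}

theorem blockTuple_natAdd (c : Fin m → Fin B) (l : Fin m) :
    blockTuple k m B c (Fin.natAdd k l) = (k + 1 + l) * B + c l :=
  Fin.append_right _ _ l

theorem blockTuple_strictMono (c : Fin m → Fin B) : StrictMono (blockTuple k m B c) := by
  have hstep (a b : ℕ) (l : Fin m) (hab : a < b) : a * B + c l < b * B := by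
    nlinarith [(c l).isLt]
  intro i j hij
  induction i using Fin.addCases with
  | left i =>
    induction j using Fin.addCases with
    | left j =>
      simp only [blockTuple, Fin.append_left]
      exact Nat.succ_lt_succ hij
    | right l =>
      rw [blockTuple_natAdd]
      have := hstep 0 1 l one_pos
      simp only [blockTuple, Fin.append_left]
      nlinarith [i.isLt]
  | right l =>
    induction j using Fin.addCases with
    | left j =>
      have : k + (l : ℕ) < j := hij
      omega
    | right l' =>
      rw [blockTuple_natAdd, blockTuple_natAdd]
      have hll' : k + (l : ℕ) < k + l' := hij
      have := hstep (k + 1 + l) (k + 1 + l') l (by omega)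
      omega

theorem blockTuple_injective : Function.Injective (blockTuple k m B) := by
  intro c c' h
  funext l
  have := congrFun h (Fin.natAdd k l)
  rw [blockTuple_natAdd, blockTuple_natAdd] at this
  exact Fin.ext (Nat.add_left_cancel this)

theorem blockTuple_pos (c : Fin m → Fin B) (i : Fin (k + m)) : 0 < blockTuple k m B c i := by
  induction i using Fin.addCases with
  | left i => simp [blockTuple]
  | right l =>
    have := (c l).pos
    rw [blockTuple_natAdd]
    positivity

theorem blockConst_pos (σ : Fin (k + m) → ℝ) : 0 < blockConst k m σ := by
  unfold blockConst
  positivity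

theorem le_prod_blockTuple (σ : Fin (k + m) → ℝ) (c : Fin m → Fin B) :
    blockConst k m σ * ∏ l : Fin m, (B : ℝ) ^ (-σ (Fin.natAdd k l))
      ≤ ∏ i, (blockTuple k m B c i : ℝ) ^ (-σ i) := by
  rw [blockConst, mul_assoc, ← prod_mul_distrib]
  simp only [Fin.prod_univ_add, blockTuple, Fin.append_left, Fin.append_right]
  refine mul_le_mul_of_nonneg_left (prod_le_prod (fun l _ => by positivity) fun l _ => ?_)
    (by positivity)
  have hB := (c l).pos
  have hlow : B ≤ (k + 1 + l) * B + c l := by nlinarith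
  have hhigh : (k + 1 + l) * B + c l ≤ (k + m + 1) * B := by nlinarith [(c l).isLt, l.isLt]
  simpa only [abs_neg] using rpow_neg_abs_mul_rpow_le_rpow (x := B)
    (y := ((k + 1 + l) * B + c l : ℕ)) (c := (k + m + 1 : ℕ)) (-σ (Fin.natAdd k l))
    (by exact_mod_cast hB) (by norm_cast; omega) (by exact_mod_cast hlow) (by exact_mod_cast hhigh)

theorem blockConst_le_sum_blockTuple (σ : Fin (k + m) → ℝ) (hB : 1 ≤ B)
    (hσ : ∑ l : Fin m, σ (Fin.natAdd k l) ≤ m) :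
    blockConst k m σ ≤ ∑ c : Fin m → Fin B, ∏ i, (blockTuple k m B c i : ℝ) ^ (-σ i) := by
  have hB0 : (0 : ℝ) < B := by exact_mod_cast hB
  calc blockConst k m σ
      ≤ blockConst k m σ * (B : ℝ) ^ ((m : ℝ) - ∑ l : Fin m, σ (Fin.natAdd k l)) :=
        le_mul_of_one_le_right (blockConst_pos σ).le
          (Real.one_le_rpow (by exact_mod_cast hB) (by linarith))
    _ = ∑ c : Fin m → Fin B, blockConst k m σ * ∏ l : Fin m, (B : ℝ) ^ (-σ (Fin.natAdd k l)) := by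
        rw [sum_const, card_univ, Fintype.card_fun, Fintype.card_fin, Fintype.card_fin,
          nsmul_eq_mul, ← Real.rpow_sum_of_pos hB0, sum_neg_distrib, Real.rpow_sub hB0,
          Real.rpow_neg hB0.le, Real.rpow_natCast, Nat.cast_pow]
        ring
    _ ≤ ∑ c : Fin m → Fin B, ∏ i, (blockTuple k m B c i : ℝ) ^ (-σ i) :=
        sum_le_sum fun c _ => le_prod_blockTuple σ c

end blockTuple

theorem not_summable_prod_rpow_neg_of_tail_le (k m : ℕ) (hm : 0 < m) (hd : 0 < k + m)
    (σ : Fin (k + m) → ℝ) (hσ : ∑ i : Fin _ with k ≤ i.val, σ i ≤ m) :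
    ¬ Summable (fun p : {n : Fin (k + m) → ℕ // StrictMono n ∧ 0 < n ⟨0, hd⟩} =>
      ∏ i, (p.1 i : ℝ) ^ (-σ i)) := by
  intro hsum
  have hT : ∑ l : Fin m, σ (Fin.natAdd k l) ≤ m := by
    have hprefix (i : Fin k) : ¬ k ≤ (i : ℕ) := not_le.2 i.isLt
    simpa [sum_filter, Fin.sum_univ_add, hprefix] using hσ
  obtain ⟨s, hs⟩ := hsum.vanishing (Iio_mem_nhds (blockConst_pos σ))
  set i₀ : Fin (k + m) := Fin.natAdd k ⟨0, hm⟩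
  set B := s.sup (fun p => p.1 i₀) + 1
  let block : (Fin m → Fin B) ↪ {n : Fin (k + m) → ℕ // StrictMono n ∧ 0 < n ⟨0, hd⟩} :=
    ⟨fun c => ⟨blockTuple k m B c, blockTuple_strictMono c, blockTuple_pos c _⟩,
      fun c c' h => blockTuple_injective (congrArg Subtype.val h)⟩
  have hdisj : Disjoint (univ.map block) s := by
    rw [disjoint_left]
    rintro _ hp hps
    obtain ⟨c, -, rfl⟩ := mem_map.1 hp
    have hsup : blockTuple k m B c i₀ < B :=
      Nat.lt_succ_of_le (le_sup (f := fun p => p.1 i₀) hps)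
    rw [blockTuple_natAdd] at hsup
    nlinarith
  have hlt := hs _ hdisj
  rw [sum_map] at hlt
  exact (blockConst_le_sum_blockTuple σ (by omega) hT).not_gt hlt

theorem sum_fin_filter_le_eq_sum_Icc (f : ℕ → ℝ) (d j : ℕ) :
    ∑ i : Fin d with j ≤ i.val, f (i + 1) = ∑ i ∈ Icc (j + 1) d, f i := by
  rw [sum_filter, Fin.sum_univ_eq_sum_range (fun i => if j ≤ i then f (i + 1) else 0),
    ← sum_filter, range_eq_Ico, Ico_filter_le, max_eq_right (Nat.zero_le j), sum_Ico_add',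
    ← Ico_add_one_right_eq_Icc]

theorem exists_one_lt_forall_mul_lt {ι : Type*} (t : Finset ι) (a b : ι → ℝ)
    (h : ∀ i ∈ t, a i < b i) : ∃ s, 1 < s ∧ ∀ i ∈ t, a i * s < b i := by
  have hev : ∀ᶠ s in 𝓝[>] (1 : ℝ), ∀ i ∈ t, a i * s < b i :=
    t.eventually_all.2 fun i hi => nhdsWithin_le_nhds <|
      ((continuous_const.mul continuous_id).tendsto' 1 (a i) (mul_one _)).eventually
        (gt_mem_nhds (h i hi))
  exact ((eventually_mem_nhdsWithin (a := (1 : ℝ)) (s := Set.Ioi 1)).and hev).exists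

/-- domain of absolute convergence of the multizeta function. -/
theorem multizeta_convergence (d : ℕ) (hd : 0 < d) (S : ℕ → ℂ) :
    Summable (fun p : {n : Fin d → ℕ // StrictMono n ∧ 0 < n ⟨0, hd⟩} =>
        ∏ i : Fin d, (p.1 i : ℝ) ^ (-(S (i.1+1)).re)) ↔
      (∀ r : ℕ, 1 ≤ r → r ≤ d →
        (d : ℝ) - r + 1 < ∑ i ∈ Finset.Icc r d, (S i).re) := by
  constructor
  · intro hsum r hr1 hrd
    by_contra! hle
    obtain ⟨k, rfl⟩ : ∃ k, r = k + 1 := ⟨r - 1, by omega⟩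
    obtain ⟨m, rfl⟩ := Nat.exists_eq_add_of_le (show k ≤ d by omega)
    refine not_summable_prod_rpow_neg_of_tail_le k m (by omega) hd (fun i => (S (i + 1)).re)
      ?_ hsum
    rw [sum_fin_filter_le_eq_sum_Icc (fun i => (S i).re)]
    push_cast at hle
    linarith
  · intro hc
    obtain ⟨s, hs, hlt⟩ := exists_one_lt_forall_mul_lt (range d) (fun j => (d - j : ℝ))
      (fun j => ∑ i ∈ Icc (j + 1) d, (S i).re) fun j hj => by
        have := hc (j + 1) (by omega) (mem_range.1 hj)
        push_cast at this
        linarith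
    refine summable_prod_rpow_neg_of_tail_nonneg d hd _ s hs fun j hj => ?_
    rw [sum_fin_filter_le_eq_sum_Icc (fun i => (S i).re - s), sum_sub_distrib, sum_const,
      Nat.card_Icc, nsmul_eq_mul, Nat.add_sub_add_right, Nat.cast_sub hj.le]
    linarith [hlt j (mem_range.2 hj)]
end

section
/- Let s ≥ 1, let z be a complex number with |z| < 1, and let a₀,…,a_{2s+1}, b₁,…,b_{2s+1} be complex numbers with Re(a₀) > 0 and Re(b_i) > Re(a_i) > 0 for all i. Then J_{2s+1}(a₀,…,a_{2s+1}; b₁,…,b_{2s+1}; z) = [Γ(a_{2s+1})Γ(b_{2s+1}−a_{2s+1}) / Γ(b_{2s+1})] · ∑_{k=0}^∞ z^k (a₀)_k (a_{2s+1})_k / (k! (b_{2s+1})_k) · J_{2s}(a₀+k, a₁+k, …, a_{2s}+k; b₁+k, …, b_{2s}+k; z). -/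
/-!
For even `m`, the nested product of `x₁, …, x_{m+1}` is that of `x₁, …, x_m` plus `x₁⋯x_{m+1}`.
So the denominator of `J_{m+1}` is `(A - B)^a₀` with `A = 1 - (nested product of x₁, …, x_m) z`
and `B = x₁⋯x_{m+1} z`, where `|B| < |A|` on the unit box, and the binomial series of
`(1 - B/A)^(-a₀)` gives `(A - B)^(-a₀) = ∑ₖ (a₀)ₖ/k! Bᵏ A^(-(a₀+k))`. The `k`-th term of the
integrand is `x_{m+1}^(a_{m+1}+k-1) (1 - x_{m+1})^(b_{m+1}-a_{m+1}-1)` times the integrand of `J_m`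
with all parameters shifted by `k`; integrating out `x_{m+1}` leaves a Beta integral times
`J_m(a + k; b + k)`. Since `x₁⋯x_{m+1} ≤ |A|`, the `k`-th term is at most `|(a₀)ₖ/k!| |z|ᵏ` times
an integrable function, which justifies integrating term by term.
-/

open MeasureTheory

open Complex
open scoped Nat

lemma poch_eq_ascPochhammer_eval (x : ℂ) (k : ℕ) : poch x k = (ascPochhammer ℂ k).eval x := by
  induction k with
  | zero => simp [poch]
  | succ k ih => rw [poch, Finset.prod_range_succ, ← poch, ih, ascPochhammer_succ_eval]

lemma Gamma_add_nat_eq_mul_poch {x : ℂ} (hx : ∀ n : ℕ, x ≠ -n) (k : ℕ) :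
    Gamma (x + k) = Gamma x * poch x k := by
  rw [poch_eq_ascPochhammer_eval, ← Gamma_add_nat_div_Gamma_eq x hx,
    mul_div_cancel₀ _ (Gamma_ne_zero hx)]

lemma choose_add_sub_one_eq_poch_div_factorial (c : ℂ) (n : ℕ) :
    Ring.choose (c + n - 1) n = poch c n / n ! := by
  rw [← Ring.multichoose_eq, poch_eq_ascPochhammer_eval,
    eq_div_iff (Nat.cast_ne_zero.2 n.factorial_ne_zero), mul_comm, ← nsmul_eq_mul,
    Ring.factorial_nsmul_multichoose_eq_ascPochhammer,
    Polynomial.ascPochhammer_smeval_cast, Polynomial.ascPochhammer_smeval_eq_eval]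

lemma hasFPowerSeriesOnBall_one_div_one_sub_cpow (c : ℂ) :
    HasFPowerSeriesOnBall (fun w ↦ 1 / (1 - w) ^ c)
      (.ofScalars ℂ fun n ↦ poch c n / n !) 0 1 := by
  simpa only [choose_add_sub_one_eq_poch_div_factorial] using
    one_div_one_sub_cpow_hasFPowerSeriesOnBall_zero c

lemma mem_eball_zero_one_of_norm_lt_one {w : ℂ} (hw : ‖w‖ < 1) : w ∈ Metric.eball (0 : ℂ) 1 := by
  rwa [Metric.mem_eball, edist_zero_right, ← ofReal_norm, ENNReal.ofReal_lt_one]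

lemma hasSum_poch_div_factorial_mul_pow (c : ℂ) {w : ℂ} (hw : ‖w‖ < 1) :
    HasSum (fun n ↦ poch c n / n ! * w ^ n) ((1 - w) ^ (-c)) := by
  simpa [FormalMultilinearSeries.ofScalars_apply_eq, cpow_neg, mul_comm] using
    (hasFPowerSeriesOnBall_one_div_one_sub_cpow c).hasSum (mem_eball_zero_one_of_norm_lt_one hw)

lemma summable_norm_poch_div_factorial_mul_pow (c : ℂ) {w : ℂ} (hw : ‖w‖ < 1) :
    Summable (fun n ↦ ‖poch c n / (n ! : ℂ)‖ * ‖w‖ ^ n) := by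
  have hf := hasFPowerSeriesOnBall_one_div_one_sub_cpow c
  simpa [FormalMultilinearSeries.ofScalars_apply_eq, mul_comm] using
    FormalMultilinearSeries.summable_norm_apply _
    (Metric.eball_subset_eball hf.r_le (mem_eball_zero_one_of_norm_lt_one hw))

lemma re_one_sub_pos {w : ℂ} (hw : ‖w‖ < 1) : 0 < (1 - w).re := by
  simpa using (re_le_norm w).trans_lt hw

lemma mul_cpow_of_re_pos {A B : ℂ} (hA : 0 < A.re) (hB : 0 < B.re) (c : ℂ) :
    (A * B) ^ c = A ^ c * B ^ c := by
  have hA0 : A ≠ 0 := fun h ↦ by simp [h] at hA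
  have hB0 : B ≠ 0 := fun h ↦ by simp [h] at hB
  have hargA := abs_lt.1 (abs_arg_lt_pi_div_two_iff.2 (Or.inl hA))
  have hargB := abs_lt.1 (abs_arg_lt_pi_div_two_iff.2 (Or.inl hB))
  rw [cpow_def_of_ne_zero (mul_ne_zero hA0 hB0), cpow_def_of_ne_zero hA0,
    cpow_def_of_ne_zero hB0, ← Complex.exp_add, ← add_mul,
    log_mul hA0 hB0 ⟨by linarith, by linarith⟩]

lemma cpow_neg_add_nat {A : ℂ} (hA : A ≠ 0) (c : ℂ) (n : ℕ) :
    A ^ (-(c + n)) = A ^ (-c) / A ^ n := by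
  rw [neg_add, cpow_add _ _ hA, cpow_neg A (n : ℂ), cpow_natCast, div_eq_mul_inv]

/-- The binomial series of `(A - B)^(-c) = A^(-c) (1 - B/A)^(-c)`. -/
lemma hasSum_cpow_neg_sub (c : ℂ) {A B : ℂ} (hA : 0 < A.re) (hBA : ‖B‖ < ‖A‖) :
    HasSum (fun n ↦ poch c n / n ! * B ^ n * A ^ (-(c + n))) ((A - B) ^ (-c)) := by
  have hA0 : A ≠ 0 := fun h ↦ by simp [h] at hA
  have hw : ‖B / A‖ < 1 := by rwa [norm_div, div_lt_one (norm_pos_iff.2 hA0)]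
  have hsub : A - B = A * (1 - B / A) := by field_simp
  have hterm : (fun n ↦ poch c n / n ! * B ^ n * A ^ (-(c + n)))
      = fun n ↦ A ^ (-c) * (poch c n / n ! * (B / A) ^ n) := by
    funext n
    rw [cpow_neg_add_nat hA0, div_pow]
    ring
  rw [hsub, mul_cpow_of_re_pos hA (re_one_sub_pos hw), hterm]
  exact (hasSum_poch_div_factorial_mul_pow c hw).mul_left _

lemma norm_pow_mul_norm_cpow_neg_add_le {A : ℂ} (hA : A ≠ 0) {p : ℝ} (hp : 0 ≤ p) (hpA : p ≤ ‖A‖)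
    (c : ℂ) (n : ℕ) : p ^ n * ‖A ^ (-(c + n))‖ ≤ ‖A ^ (-c)‖ := by
  rw [cpow_neg_add_nat hA, norm_div, norm_pow, mul_div_left_comm]
  exact mul_le_of_le_one_right (norm_nonneg _)
    ((div_le_one (pow_pos (norm_pos_iff.2 hA) n)).2 (pow_le_pow_left₀ hp hpA n))

lemma norm_cpow_neg_le {A c : ℂ} {δ : ℝ} (hδ : 0 < δ) (hA : δ ≤ ‖A‖) (hc : 0 ≤ c.re) :
    ‖A ^ (-c)‖ ≤ δ ^ (-c.re) * Real.exp (Real.pi * |c.im|) := by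
  have hA0 : A ≠ 0 := norm_pos_iff.1 (hδ.trans_le hA)
  rw [norm_cpow_of_ne_zero hA0, div_eq_mul_inv, ← Real.exp_neg, neg_re, neg_im]
  refine mul_le_mul (Real.rpow_le_rpow_of_nonpos hδ hA (neg_nonpos.2 hc))
    (Real.exp_le_exp.2 ?_) (Real.exp_pos _).le (Real.rpow_nonneg hδ.le _)
  calc -(A.arg * -c.im) ≤ |A.arg| * |c.im| := by
        rw [← abs_mul]; linarith [le_abs_self (A.arg * c.im)]
    _ ≤ Real.pi * |c.im| := by gcongr; exact abs_arg_le_pi A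

lemma one_sub_mul_norm_le_norm_one_sub_mul {q : ℝ} (hq : 0 ≤ q) (z : ℂ) :
    1 - q * ‖z‖ ≤ ‖1 - q * z‖ := by
  simpa [norm_mul, abs_of_nonneg hq] using norm_sub_norm_le (1 : ℂ) (q * z)

noncomputable def betaKernel (u v : ℂ) (t : ℝ) : ℂ :=
  (t : ℂ) ^ (u - 1) * ((1 - t : ℝ) : ℂ) ^ (v - 1)

lemma integrableOn_betaKernel {u v : ℂ} (hu : 0 < u.re) (hv : 0 < v.re) :
    IntegrableOn (betaKernel u v) (Set.Ioo 0 1) := by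
  refine ((betaIntegral_convergent hu hv).1.mono_set Set.Ioo_subset_Ioc_self).congr_fun
    (fun t _ ↦ ?_) measurableSet_Ioo
  simp [betaKernel]

lemma setIntegral_betaKernel {u v : ℂ} (hu : 0 < u.re) (hv : 0 < v.re) :
    ∫ t in Set.Ioo 0 1, betaKernel u v t = Gamma u * Gamma v / Gamma (u + v) := by
  have hG : Gamma (u + v) ≠ 0 := Gamma_ne_zero_of_re_pos (by rw [add_re]; linarith)
  rw [Gamma_mul_Gamma_eq_betaIntegral hu hv, mul_div_cancel_left₀ _ hG, betaIntegral,
    intervalIntegral.integral_of_le zero_le_one, integral_Ioc_eq_integral_Ioo]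
  simp [betaKernel]

lemma betaKernel_add_nat (u v : ℂ) {t : ℝ} (ht : 0 < t) (k : ℕ) :
    betaKernel (u + k) v t = betaKernel u v t * (t : ℂ) ^ k := by
  rw [betaKernel, betaKernel, add_sub_right_comm, cpow_add _ _ (ofReal_ne_zero.2 ht.ne'),
    cpow_natCast]
  ring

lemma integral_pi_last_mul_init {α 𝕜 : Type*} [MeasurableSpace α] [RCLike 𝕜] {m : ℕ}
    (μ : Measure α) [SigmaFinite μ] (f : α → 𝕜) (g : (Fin m → α) → 𝕜) :
    ∫ x, f (x (Fin.last m)) * g (Fin.init x) ∂Measure.pi (fun _ ↦ μ)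
      = (∫ t, f t ∂μ) * ∫ y, g y ∂Measure.pi (fun _ ↦ μ) := by
  rw [← integral_prod_mul,
    ← (measurePreserving_piFinSuccAbove (fun _ ↦ μ) (Fin.last m)).integral_comp']
  simp

def unitBox (m : ℕ) : Set (Fin m → ℝ) := Set.univ.pi fun _ ↦ Set.Ioo 0 1

lemma measurableSet_unitBox (m : ℕ) : MeasurableSet (unitBox m) :=
  .univ_pi fun _ ↦ measurableSet_Ioo

lemma volume_restrict_unitBox (m : ℕ) :
    volume.restrict (unitBox m) = Measure.pi fun _ ↦ volume.restrict (Set.Ioo (0 : ℝ) 1) := by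
  rw [unitBox, volume_pi, Measure.restrict_pi_pi]

lemma setIntegral_unitBox_succ {m : ℕ} (f : ℝ → ℂ) (g : (Fin m → ℝ) → ℂ) :
    ∫ x in unitBox (m + 1), f (x (Fin.last m)) * g (Fin.init x)
      = (∫ t in Set.Ioo 0 1, f t) * ∫ y in unitBox m, g y := by
  simp only [volume_restrict_unitBox]
  exact integral_pi_last_mul_init _ f g

lemma nestR_tail_mul_headI (l : List ℝ) : nestR l.tail * l.headI = 1 - nestR l := by
  cases l <;> simp [nestR]; rfl

lemma nestR_mem_Icc {l : List ℝ} (hl : ∀ t ∈ l, t ∈ Set.Icc (0 : ℝ) 1) :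
    nestR l ∈ Set.Icc (0 : ℝ) 1 := by
  induction l with
  | nil => simp [nestR]
  | cons t l ih =>
    obtain ⟨ht0, ht1⟩ := hl t List.mem_cons_self
    obtain ⟨hr0, hr1⟩ := ih fun u hu ↦ hl u (List.mem_cons_of_mem t hu)
    constructor <;> simp only [nestR] <;> nlinarith

lemma nestR_append_singleton (l : List ℝ) (t : ℝ) :
    nestR (l ++ [t]) = nestR l - (-1) ^ l.length * t * l.prod := by
  induction l with
  | nil => simp [nestR]
  | cons s l ih => simp only [List.cons_append, nestR, ih, List.length_cons, List.prod_cons]; ring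

/-- `(1 - (⋯(1 - x_m)x_{m-1}⋯))x₁`, the nested product in the denominator of `Jint`. -/
noncomputable def nestedProd {m : ℕ} (x : Fin m → ℝ) : ℝ := 1 - nestR (List.ofFn x)

lemma nestedProd_mem_Icc {m : ℕ} {x : Fin m → ℝ} (hx : ∀ i, x i ∈ Set.Icc (0 : ℝ) 1) :
    nestedProd x ∈ Set.Icc (0 : ℝ) 1 := by
  obtain ⟨h0, h1⟩ := nestR_mem_Icc (l := List.ofFn x) (by simpa [List.mem_ofFn] using hx)
  exact ⟨by unfold nestedProd; linarith, by unfold nestedProd; linarith⟩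

lemma nestedProd_snoc {m : ℕ} (y : Fin m → ℝ) (t : ℝ) :
    nestedProd (Fin.snoc y t : Fin (m + 1) → ℝ) = nestedProd y + (-1) ^ m * t * ∏ i, y i := by
  rw [nestedProd, nestedProd, List.ofFn_succ', List.concat_eq_append, nestR_append_singleton]
  simp only [Fin.snoc_castSucc, Fin.snoc_last, List.length_ofFn, List.prod_ofFn]
  ring

lemma nestedProd_eq_init_add_prod {m : ℕ} (hm : Even m) (x : Fin (m + 1) → ℝ) :
    nestedProd x = nestedProd (Fin.init x) + ∏ i, x i := by
  conv_lhs => rw [← Fin.snoc_init_self x]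
  rw [nestedProd_snoc, hm.neg_one_pow, one_mul, Fin.prod_univ_castSucc, mul_comm]
  rfl

lemma continuous_nestedProd (m : ℕ) : Continuous (nestedProd : (Fin m → ℝ) → ℝ) := by
  induction m with
  | zero => exact continuous_of_const fun x y ↦ congrArg _ (Subsingleton.elim x y)
  | succ m ih =>
    have h : (nestedProd : (Fin (m + 1) → ℝ) → ℝ) =
        fun x ↦ (1 - nestedProd fun i : Fin m ↦ x i.succ) * x 0 := by
      funext x
      rw [nestedProd, List.ofFn_succ, nestR, nestedProd]
      ring
    rw [h]
    fun_prop

noncomputable def weight {m : ℕ} (a b : ℕ → ℂ) (x : Fin m → ℝ) : ℂ :=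
  ∏ i : Fin m, betaKernel (a (i.1 + 1)) (b (i.1 + 1) - a (i.1 + 1)) (x i)

noncomputable def Jintegrand (m : ℕ) (a b : ℕ → ℂ) (z : ℂ) (x : Fin m → ℝ) : ℂ :=
  weight a b x / (1 - nestedProd x * z) ^ a 0

lemma Jint_eq_setIntegral (m : ℕ) (a b : ℕ → ℂ) (z : ℂ) :
    Jint m a b z = ∫ x in unitBox m, Jintegrand m a b z x := by
  simp only [Jint, Jintegrand, weight, betaKernel, nestedProd, nestR_tail_mul_headI, unitBox]

lemma integrableOn_weight {m : ℕ} {a b : ℕ → ℂ}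
    (hab : ∀ i : Fin m, 0 < (a (i.1 + 1)).re ∧ 0 < (b (i.1 + 1) - a (i.1 + 1)).re) :
    IntegrableOn (weight a b) (unitBox m) := by
  rw [IntegrableOn, volume_restrict_unitBox]
  exact Integrable.fin_nat_prod fun i ↦ integrableOn_betaKernel (hab i).1 (hab i).2

lemma weight_succ {m : ℕ} (a b : ℕ → ℂ) (x : Fin (m + 1) → ℝ) :
    weight a b x = weight a b (Fin.init x) *
      betaKernel (a (m + 1)) (b (m + 1) - a (m + 1)) (x (Fin.last m)) := by
  rw [weight, Fin.prod_univ_castSucc]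
  rfl

lemma weight_add_nat {m : ℕ} (a b : ℕ → ℂ) {y : Fin m → ℝ} (hy : ∀ i, 0 < y i) (k : ℕ) :
    weight (fun i ↦ a i + k) (fun i ↦ b i + k) y = weight a b y * ((∏ i, y i : ℝ) : ℂ) ^ k := by
  simp only [weight, add_sub_add_right_eq_sub, betaKernel_add_nat _ _ (hy _), ofReal_prod,
    Finset.prod_pow, Finset.prod_mul_distrib]

lemma pos_of_mem_unitBox {m : ℕ} {x : Fin m → ℝ} (hx : x ∈ unitBox m) (i : Fin m) : 0 < x i :=
  (hx i (Set.mem_univ i)).1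

lemma mem_Icc_of_mem_unitBox {m : ℕ} {x : Fin m → ℝ} (hx : x ∈ unitBox m) (i : Fin m) :
    x i ∈ Set.Icc 0 1 :=
  Set.Ioo_subset_Icc_self (hx i (Set.mem_univ i))

/-- The `k`-th term of the expansion of `Jintegrand (m + 1)` in powers of `z x₁⋯x_{m+1}`. -/
noncomputable def Jterm (m : ℕ) (a b : ℕ → ℂ) (z : ℂ) (k : ℕ) (x : Fin (m + 1) → ℝ) : ℂ :=
  poch (a 0) k / k ! * z ^ k *
    (betaKernel (a (m + 1) + k) (b (m + 1) - a (m + 1)) (x (Fin.last m)) *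
      Jintegrand m (fun i ↦ a i + k) (fun i ↦ b i + k) z (Fin.init x))

lemma Jterm_eq {m : ℕ} (a b : ℕ → ℂ) (z : ℂ) (k : ℕ) {x : Fin (m + 1) → ℝ}
    (hx : x ∈ unitBox (m + 1)) :
    Jterm m a b z k x = poch (a 0) k / k ! * (((∏ i, x i : ℝ) : ℂ) * z) ^ k *
      (1 - nestedProd (Fin.init x) * z) ^ (-(a 0 + k)) * weight a b x := by
  rw [Jterm, Jintegrand, weight_add_nat a b (y := Fin.init x) (fun i ↦ pos_of_mem_unitBox hx _),
    betaKernel_add_nat _ _ (pos_of_mem_unitBox hx _), weight_succ, Fin.prod_univ_castSucc,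
    cpow_neg]
  push_cast
  simp only [Fin.init]
  ring

lemma integral_Jterm {m : ℕ} (a b : ℕ → ℂ) (z : ℂ) (k : ℕ) (hA : 0 < (a (m + 1)).re)
    (hBA : 0 < (b (m + 1) - a (m + 1)).re) :
    ∫ x in unitBox (m + 1), Jterm m a b z k x = poch (a 0) k / k ! * z ^ k *
      (Gamma (a (m + 1) + k) * Gamma (b (m + 1) - a (m + 1)) / Gamma (b (m + 1) + k)) *
      Jint m (fun i ↦ a i + k) (fun i ↦ b i + k) z := by
  have hAk : 0 < (a (m + 1) + k).re := by simp only [add_re, natCast_re]; positivity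
  simp only [Jterm]
  rw [integral_const_mul, setIntegral_unitBox_succ, setIntegral_betaKernel hAk hBA,
    Jint_eq_setIntegral, show a (m + 1) + k + (b (m + 1) - a (m + 1)) = b (m + 1) + k by ring]
  ring

lemma nestedProd_init_add_prod_le {m : ℕ} (hm : Even m) {x : Fin (m + 1) → ℝ}
    (hx : x ∈ unitBox (m + 1)) :
    0 ≤ nestedProd (Fin.init x) ∧ 0 < ∏ i, x i ∧ nestedProd (Fin.init x) + ∏ i, x i ≤ 1 := by
  refine ⟨(nestedProd_mem_Icc fun i ↦ mem_Icc_of_mem_unitBox hx _).1,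
    Finset.prod_pos fun i _ ↦ pos_of_mem_unitBox hx i, ?_⟩
  rw [← nestedProd_eq_init_add_prod hm]
  exact (nestedProd_mem_Icc (mem_Icc_of_mem_unitBox hx)).2

lemma hasSum_Jterm {m : ℕ} (hm : Even m) (a b : ℕ → ℂ) {z : ℂ} (hz : ‖z‖ < 1)
    {x : Fin (m + 1) → ℝ} (hx : x ∈ unitBox (m + 1)) :
    HasSum (fun k ↦ Jterm m a b z k x) (Jintegrand (m + 1) a b z x) := by
  obtain ⟨hq, hp, hqp⟩ := nestedProd_init_add_prod_le hm hx
  set q := nestedProd (Fin.init x)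
  set p := ∏ i, x i
  have hqz := one_sub_mul_norm_le_norm_one_sub_mul hq z
  have hA : 0 < (1 - q * z : ℂ).re := re_one_sub_pos (by
    rw [norm_mul, norm_real, Real.norm_of_nonneg hq]; nlinarith [norm_nonneg z])
  have hBA : ‖(p * z : ℂ)‖ < ‖(1 - q * z : ℂ)‖ := by
    rw [norm_mul, norm_real, Real.norm_of_nonneg hp.le]; nlinarith [norm_nonneg z]
  have hJ : Jintegrand (m + 1) a b z x = ((1 - q * z) - p * z) ^ (-a 0) * weight a b x := by
    rw [Jintegrand, nestedProd_eq_init_add_prod hm, ofReal_add, add_mul, ← sub_sub, cpow_neg,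
      div_eq_inv_mul]
  rw [hJ]
  simp_rw [Jterm_eq a b z _ hx]
  exact (hasSum_cpow_neg_sub (a 0) hA hBA).mul_right _

lemma norm_Jterm_le {m : ℕ} (hm : Even m) (a b : ℕ → ℂ) {z : ℂ} (hz : ‖z‖ < 1)
    (ha0 : 0 ≤ (a 0).re) (k : ℕ) {x : Fin (m + 1) → ℝ} (hx : x ∈ unitBox (m + 1)) :
    ‖Jterm m a b z k x‖ ≤ ‖poch (a 0) k / (k ! : ℂ)‖ * ‖z‖ ^ k *
      ((1 - ‖z‖) ^ (-(a 0).re) * Real.exp (Real.pi * |(a 0).im|)) * ‖weight a b x‖ := by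
  obtain ⟨hq, hp, hqp⟩ := nestedProd_init_add_prod_le hm hx
  set q := nestedProd (Fin.init x)
  set p := ∏ i, x i
  have hqz := one_sub_mul_norm_le_norm_one_sub_mul hq z
  have hpA : p ≤ ‖(1 - q * z : ℂ)‖ := by nlinarith [norm_nonneg z]
  have hzA : 1 - ‖z‖ ≤ ‖(1 - q * z : ℂ)‖ := by nlinarith [norm_nonneg z]
  have hA0 : (1 - q * z : ℂ) ≠ 0 := norm_pos_iff.1 (hp.trans_le hpA)
  have key : p ^ k * ‖(1 - q * z : ℂ) ^ (-(a 0 + k))‖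
      ≤ (1 - ‖z‖) ^ (-(a 0).re) * Real.exp (Real.pi * |(a 0).im|) :=
    (norm_pow_mul_norm_cpow_neg_add_le hA0 hp.le hpA _ k).trans
      (norm_cpow_neg_le (by linarith) hzA ha0)
  rw [Jterm_eq a b z k hx, norm_mul, norm_mul, norm_mul, mul_pow, norm_mul, norm_pow, norm_pow,
    norm_real, Real.norm_of_nonneg hp.le]
  calc ‖poch (a 0) k / (k ! : ℂ)‖ * (p ^ k * ‖z‖ ^ k) * ‖(1 - q * z : ℂ) ^ (-(a 0 + k))‖ *
        ‖weight a b x‖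
      = ‖poch (a 0) k / (k ! : ℂ)‖ * ‖z‖ ^ k * (p ^ k * ‖(1 - q * z : ℂ) ^ (-(a 0 + k))‖) *
          ‖weight a b x‖ := by ring
    _ ≤ _ := by gcongr

lemma measurable_Jterm (m : ℕ) (a b : ℕ → ℂ) (z : ℂ) (k : ℕ) : Measurable (Jterm m a b z k) := by
  have := (continuous_nestedProd m).measurable
  unfold Jterm Jintegrand weight betaKernel
  fun_prop

lemma integrableOn_Jterm {m : ℕ} (hm : Even m) {a b : ℕ → ℂ} {z : ℂ} (hz : ‖z‖ < 1)
    (ha0 : 0 ≤ (a 0).re)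
    (hab : ∀ i : Fin (m + 1), 0 < (a (i.1 + 1)).re ∧ 0 < (b (i.1 + 1) - a (i.1 + 1)).re)
    (k : ℕ) : IntegrableOn (Jterm m a b z k) (unitBox (m + 1)) :=
  ((integrableOn_weight hab).norm.const_mul _).mono'
    (measurable_Jterm m a b z k).aestronglyMeasurable
    ((ae_restrict_iff' (measurableSet_unitBox _)).2
      (.of_forall fun _ hx ↦ norm_Jterm_le hm a b hz ha0 k hx))

lemma summable_integral_norm_Jterm {m : ℕ} (hm : Even m) {a b : ℕ → ℂ} {z : ℂ} (hz : ‖z‖ < 1)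
    (ha0 : 0 ≤ (a 0).re)
    (hab : ∀ i : Fin (m + 1), 0 < (a (i.1 + 1)).re ∧ 0 < (b (i.1 + 1) - a (i.1 + 1)).re) :
    Summable fun k ↦ ∫ x in unitBox (m + 1), ‖Jterm m a b z k x‖ := by
  set C := (1 - ‖z‖) ^ (-(a 0).re) * Real.exp (Real.pi * |(a 0).im|)
  refine ((summable_norm_poch_div_factorial_mul_pow (a 0) hz).mul_right
    (C * ∫ x in unitBox (m + 1), ‖weight a b x‖)).of_nonneg_of_le
    (fun k ↦ integral_nonneg fun _ ↦ norm_nonneg _) fun k ↦ ?_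
  rw [← mul_assoc, ← integral_const_mul]
  exact setIntegral_mono_on (integrableOn_Jterm hm hz ha0 hab k).norm
    ((integrableOn_weight hab).norm.const_mul _) (measurableSet_unitBox _)
    fun x hx ↦ norm_Jterm_le hm a b hz ha0 k hx

theorem Jint_succ_eq_tsum {m : ℕ} (hm : Even m) {a b : ℕ → ℂ} {z : ℂ} (hz : ‖z‖ < 1)
    (ha0 : 0 ≤ (a 0).re)
    (hab : ∀ i : Fin (m + 1), 0 < (a (i.1 + 1)).re ∧ 0 < (b (i.1 + 1) - a (i.1 + 1)).re) :
    Jint (m + 1) a b z = ∑' k : ℕ, poch (a 0) k / k ! * z ^ k *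
      (Gamma (a (m + 1) + k) * Gamma (b (m + 1) - a (m + 1)) / Gamma (b (m + 1) + k)) *
      Jint m (fun i ↦ a i + k) (fun i ↦ b i + k) z := by
  obtain ⟨hA, hBA⟩ := hab (Fin.last m)
  rw [Jint_eq_setIntegral, setIntegral_congr_fun (measurableSet_unitBox _)
      fun x hx ↦ (hasSum_Jterm hm a b hz hx).tsum_eq.symm,
    ← integral_tsum_of_summable_integral_norm (integrableOn_Jterm hm hz ha0 hab)
      (summable_integral_norm_Jterm hm hz ha0 hab)]
  exact tsum_congr fun k ↦ integral_Jterm a b z k hA hBA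

lemma ne_neg_natCast_of_re_pos {x : ℂ} (hx : 0 < x.re) (n : ℕ) : x ≠ -n := by
  rintro rfl
  simp only [neg_re, natCast_re, Left.neg_pos_iff] at hx
  exact (Nat.cast_nonneg n).not_gt hx

lemma Gamma_add_nat_mul_div_Gamma_add_nat {u w : ℂ} (hu : 0 < u.re) (hw : 0 < w.re) (c : ℂ)
    (k : ℕ) :
    Gamma (u + k) * c / Gamma (w + k) = Gamma u * c / Gamma w * (poch u k / poch w k) := by
  have hwk : Gamma (w + k) ≠ 0 :=
    Gamma_ne_zero_of_re_pos (by simp only [add_re, natCast_re]; positivity)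
  rw [Gamma_add_nat_eq_mul_poch (ne_neg_natCast_of_re_pos hw)] at hwk ⊢
  rw [Gamma_add_nat_eq_mul_poch (ne_neg_natCast_of_re_pos hu)]
  obtain ⟨hΓw, hpw⟩ := mul_ne_zero_iff.1 hwk
  field_simp

theorem J_odd_recursion_general (s : ℕ) (z : ℂ) (hz : ‖z‖ < 1) (a b : ℕ → ℂ)
    (ha0 : 0 < (a 0).re)
    (hab : ∀ i : ℕ, 1 ≤ i → i ≤ 2*s+1 → (a i).re < (b i).re ∧ 0 < (a i).re) :
    Jint (2*s+1) a b z =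
      (Complex.Gamma (a (2*s+1)) * Complex.Gamma (b (2*s+1) - a (2*s+1)) /
        Complex.Gamma (b (2*s+1))) *
      ∑' k : ℕ, z ^ k *
        (poch (a 0) k * poch (a (2*s+1)) k / ((Nat.factorial k : ℂ) * poch (b (2*s+1)) k)) *
        Jint (2*s) (fun i => a i + k) (fun i => b i + k) z := by
  have hre : ∀ i : Fin (2 * s + 1), 0 < (a (i.1 + 1)).re ∧ 0 < (b (i.1 + 1) - a (i.1 + 1)).re :=
    fun i ↦ have h := hab (i.1 + 1) (by omega) (by omega); ⟨h.2, by rw [sub_re]; linarith [h.1]⟩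
  have hA := (hab (2 * s + 1) (by omega) le_rfl).2
  have hB : 0 < (b (2 * s + 1)).re := hA.trans (hab (2 * s + 1) (by omega) le_rfl).1
  rw [Jint_succ_eq_tsum (even_two_mul s) hz ha0.le hre, ← tsum_mul_left]
  refine tsum_congr fun k ↦ ?_
  rw [Gamma_add_nat_mul_div_Gamma_add_nat hA hB]
  ring

/-- the odd-step recursion for the Vasilyev-type integral. -/
theorem J_odd_recursion (s : ℕ) (hs : 1 ≤ s) (z : ℂ) (hz : ‖z‖ < 1) (a b : ℕ → ℂ)
    (ha0 : 0 < (a 0).re)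
    (hab : ∀ i : ℕ, 1 ≤ i → i ≤ 2*s+1 → (a i).re < (b i).re ∧ 0 < (a i).re) :
    Jint (2*s+1) a b z =
      (Complex.Gamma (a (2*s+1)) * Complex.Gamma (b (2*s+1) - a (2*s+1)) /
        Complex.Gamma (b (2*s+1))) *
      ∑' k : ℕ, z ^ k *
        (poch (a 0) k * poch (a (2*s+1)) k / ((Nat.factorial k : ℂ) * poch (b (2*s+1)) k)) *
        Jint (2*s) (fun i => a i + k) (fun i => b i + k) z :=
  J_odd_recursion_general s z hz a b ha0 hab
end
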